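/- Let X be Laplace(0, b) with b > 0 and Y ~ N(0, σ²) independent with σ² ≥ 0. If X + Y is Laplace(0, b') for some b' > 0, then σ² = 0 and b' = b. -/

import Mathlib

/-!
Independence makes the characteristic function of `X + Y` the product of those of `X` and `Y`,
so `(1 + b'² t²)⁻¹ = (1 + b² t²)⁻¹ · exp (-v t² / 2)` for every real `t`. With `s = t²` this says
`exp (v s / 2) (1 + b² s) = 1 + b'² s` for all `s ≥ 0`; since `exp (v s / 2) ≥ 1 + v s / 2`, the
left side grows quadratically when `v > 0` while the right side is affine. Hence `v = 0`, and then
`b'² = b²`.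
-/

open MeasureTheory ProbabilityTheory Real
open scoped NNReal

/-- The Laplace distribution with location 0 and scale `b`, given by the density
`x ↦ exp (-|x| / b) / (2 * b)` with respect to Lebesgue measure. -/
noncomputable def laplaceMeasure (b : ℝ) : Measure ℝ :=
  volume.withDensity fun x => ENNReal.ofReal (Real.exp (-|x| / b) / (2 * b))

lemma integral_laplaceMeasure {E : Type*} [NormedAddCommGroup E] [NormedSpace ℝ E] {b : ℝ}
    (hb : 0 ≤ b) (g : ℝ → E) :
    ∫ x, g x ∂laplaceMeasure b = ∫ x, (rexp (-|x| / b) / (2 * b)) • g x := by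
  rw [laplaceMeasure, integral_withDensity_eq_integral_toReal_smul (by fun_prop)
    (ae_of_all _ fun _ => ENNReal.ofReal_lt_top)]
  simp_rw [ENNReal.toReal_ofReal (by positivity : 0 ≤ rexp _ / (2 * b))]

open Set Complex in
lemma charFun_laplaceMeasure {b : ℝ} (hb : 0 < b) (t : ℝ) :
    charFun (laplaceMeasure b) t = ((1 + b ^ 2 * t ^ 2)⁻¹ : ℝ) := by
  set f : ℝ → ℂ := fun x => (rexp (-|x| / b) / (2 * b)) • cexp (t * x * I)
  have hf_Ioi : ∀ x ∈ Ioi (0 : ℝ), f x = (2 * b : ℂ)⁻¹ * cexp ((-(b : ℂ)⁻¹ + t * I) * x) := by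
    intro x hx
    simp only [f, abs_of_pos (mem_Ioi.mp hx), real_smul, ofReal_div, ofReal_exp, ofReal_mul]
    push_cast
    rw [div_eq_inv_mul _ (2 * (b : ℂ)), mul_assoc, ← Complex.exp_add]
    ring_nf
  have hf_Iic : ∀ x ∈ Iic (0 : ℝ), f x = (2 * b : ℂ)⁻¹ * cexp (((b : ℂ)⁻¹ + t * I) * x) := by
    intro x hx
    simp only [f, abs_of_nonpos (mem_Iic.mp hx), real_smul, ofReal_div, ofReal_exp, ofReal_mul]
    push_cast
    rw [div_eq_inv_mul _ (2 * (b : ℂ)), mul_assoc, ← Complex.exp_add]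
    ring_nf
  have hre_Ioi : (-(b : ℂ)⁻¹ + t * I).re < 0 := by simp [hb]
  have hre_Iic : 0 < ((b : ℂ)⁻¹ + t * I).re := by simp [hb]
  have hint_Ioi : IntegrableOn f (Ioi 0) :=
    IntegrableOn.congr_fun ((integrableOn_exp_mul_complex_Ioi hre_Ioi 0).const_mul _)
      (fun x hx => (hf_Ioi x hx).symm) measurableSet_Ioi
  have hint_Iic : IntegrableOn f (Iic 0) :=
    IntegrableOn.congr_fun ((integrableOn_exp_mul_complex_Iic hre_Iic 0).const_mul _)
      (fun x hx => (hf_Iic x hx).symm) measurableSet_Iic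
  rw [charFun_apply_real, integral_laplaceMeasure hb.le,
    ← intervalIntegral.integral_Iic_add_Ioi hint_Iic hint_Ioi,
    setIntegral_congr_fun measurableSet_Iic hf_Iic, setIntegral_congr_fun measurableSet_Ioi hf_Ioi,
    integral_const_mul, integral_const_mul, integral_exp_mul_complex_Ioi hre_Ioi,
    integral_exp_mul_complex_Iic hre_Iic]
  have hb₀ : (b : ℂ) ≠ 0 := mod_cast hb.ne'
  have h₁ : 1 + b * t * I ≠ 0 := fun h => by simpa using congrArg re h
  have h₂ : -1 + b * t * I ≠ 0 := fun h => by simpa using congrArg re h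
  have h₃ : 1 + (b : ℂ) ^ 2 * t ^ 2 ≠ 0 := mod_cast (by positivity : 1 + b ^ 2 * t ^ 2 ≠ 0)
  simp only [ofReal_zero, mul_zero, Complex.exp_zero]
  push_cast
  field_simp
  linear_combination (-2 * b ^ 2 * t ^ 2 : ℂ) * I_sq

lemma charFun_gaussianReal_zero (v : ℝ≥0) (t : ℝ) :
    charFun (gaussianReal 0 v) t = ↑(rexp (-(v * t ^ 2 / 2))) := by
  rw [charFun_gaussianReal]
  push_cast
  ring_nf

lemma eq_zero_of_forall_exp_mul_one_add_mul_eq {v c c' : ℝ} (hv : 0 ≤ v) (hc : 0 < c)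
    (h : ∀ s, 0 ≤ s → rexp (v * s) * (1 + c * s) = 1 + c' * s) : v = 0 := by
  have hquad : ∀ s, 0 ≤ s → v * c * s ^ 2 ≤ c' * s := by
    intro s hs
    have hexp := mul_le_mul_of_nonneg_right (add_one_le_exp (v * s))
      (by positivity : 0 ≤ 1 + c * s)
    nlinarith [h s hs]
  by_contra hv₀
  have hvc : 0 < v * c := mul_pos (lt_of_le_of_ne hv (Ne.symm hv₀)) hc
  set s := (|c'| + 1) / (v * c)
  have hs : 0 < s := by positivity
  have hvcs : v * c * s = |c'| + 1 := mul_div_cancel₀ _ hvc.ne'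
  nlinarith [hquad s hs.le, le_abs_self c']

/-- Let `X` be `Laplace(0, b)` with `b > 0` and `Y ~ N(0, v)` independent with `v ≥ 0`.
If `X + Y` is `Laplace(0, b')` for some `b' > 0`, then `v = 0` and `b' = b`. -/
theorem stmt_14 {Ω : Type*} [MeasurableSpace Ω] (μ : Measure Ω) [IsProbabilityMeasure μ]
    (X Y : Ω → ℝ) (hMX : Measurable X) (hMY : Measurable Y)
    (hindep : IndepFun X Y μ)
    (b : ℝ) (hb : 0 < b) (v : ℝ≥0)
    (hX : μ.map X = laplaceMeasure b)
    (hY : μ.map Y = gaussianReal 0 v)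
    (b' : ℝ) (hb' : 0 < b')
    (hZ : μ.map (fun ω => X ω + Y ω) = laplaceMeasure b') :
    v = 0 ∧ b' = b := by
  have hchar : ∀ t : ℝ, rexp (v / 2 * t ^ 2) * (1 + b ^ 2 * t ^ 2) = 1 + b' ^ 2 * t ^ 2 := by
    intro t
    have h := congrFun (hindep.charFun_map_fun_add_eq_mul hMX.aemeasurable hMY.aemeasurable) t
    rw [hZ, Pi.mul_apply, hX, hY, charFun_laplaceMeasure hb, charFun_laplaceMeasure hb',
      charFun_gaussianReal_zero] at h
    norm_cast at h
    rw [← inv_inj, mul_inv, inv_inv, inv_inv, ← exp_neg, neg_neg] at h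
    rw [h]
    ring_nf
  have hv : (v : ℝ) = 0 := by
    have := eq_zero_of_forall_exp_mul_one_add_mul_eq (v := v / 2) (c := b ^ 2)
      (by positivity) (by positivity) fun s hs => by simpa [sq_sqrt hs] using hchar √s
    linarith
  have hsq : b' ^ 2 = b ^ 2 := by simpa [hv] using (hchar 1).symm
  exact ⟨mod_cast hv, (pow_left_inj₀ hb'.le hb.le two_ne_zero).mp hsq⟩
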